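/- Let a, b : ℝ → ℝ be smooth, non-constant, periodic functions. The effective infinitesimal strain of the infinitesimal isometry ẋ(u,v) = (−∫₀ᵘ a'², ∫₀ᵛ b'², a(u) − b(v)) of the translation graph x(u,v) = (u, v, a(u)+b(v)) is E = diag(−∫a'², ∫b'²), and its determinant is negative. Consequently, any effective infinitesimal isometry with coefficients (e,f,g) satisfies e/g = (∫a'²)/(∫b'²) > 0 whenever g ≠ 0; i.e., the graph bends synclastically on average. -/

import Mathlib

open MeasureTheory
open scoped ContDiff

/-- First partial derivative (direction `(1,0)`). -/
noncomputable def pd1 (f : ℝ × ℝ → ℝ) (p : ℝ × ℝ) : ℝ := fderiv ℝ f p (1, 0)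

/-- Second partial derivative (direction `(0,1)`). -/
noncomputable def pd2 (f : ℝ × ℝ → ℝ) (p : ℝ × ℝ) : ℝ := fderiv ℝ f p (0, 1)

/-- Linearized Monge–Ampère operator `M_z w = z₁₁w₂₂ + z₂₂w₁₁ − 2z₁₂w₁₂`. -/
noncomputable def Mop (z w : ℝ × ℝ → ℝ) (p : ℝ × ℝ) : ℝ :=
  pd1 (pd1 z) p * pd2 (pd2 w) p + pd2 (pd2 z) p * pd1 (pd1 w) p
    - 2 * pd1 (pd2 z) p * pd1 (pd2 w) p

/-- Doubly periodic (periods `(1,0)` and `(0,1)`). -/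
def DPer (f : ℝ × ℝ → ℝ) : Prop :=
  ∀ p, f (p + ((1 : ℝ), (0 : ℝ))) = f p ∧ f (p + ((0 : ℝ), (1 : ℝ))) = f p

lemma hasDerivAt_slice1 {f : ℝ × ℝ → ℝ} {u v : ℝ} (hf : DifferentiableAt ℝ f (u, v)) :
    HasDerivAt (fun t => f (t, v)) (pd1 f (u, v)) u := by
  have hc : HasDerivAt (fun t : ℝ => (t, v)) ((1 : ℝ), (0 : ℝ)) u := by
    simpa using (HasDerivAt.prodMk (hasDerivAt_id u) (hasDerivAt_const u v))
  exact (hf.hasFDerivAt.comp_hasDerivAt u hc)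

lemma hasDerivAt_slice2 {f : ℝ × ℝ → ℝ} {u v : ℝ} (hf : DifferentiableAt ℝ f (u, v)) :
    HasDerivAt (fun t => f (u, t)) (pd2 f (u, v)) v := by
  have hc : HasDerivAt (fun t : ℝ => (u, t)) ((0 : ℝ), (1 : ℝ)) v := by
    simpa using (HasDerivAt.prodMk (hasDerivAt_const v u) (hasDerivAt_id v))
  exact (hf.hasFDerivAt.comp_hasDerivAt v hc)

lemma contDiff_pd1 {f : ℝ × ℝ → ℝ} (hf : ContDiff ℝ (⊤ : ℕ∞) f) : ContDiff ℝ (⊤ : ℕ∞) (pd1 f) := by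
  have h1 : ContDiff ℝ (⊤ : ℕ∞) (fderiv ℝ f) := (hf.fderiv_right (le_refl _))
  exact (ContinuousLinearMap.apply ℝ ℝ ((1:ℝ), (0:ℝ))).contDiff.comp h1

lemma contDiff_pd2 {f : ℝ × ℝ → ℝ} (hf : ContDiff ℝ (⊤ : ℕ∞) f) : ContDiff ℝ (⊤ : ℕ∞) (pd2 f) := by
  have h1 : ContDiff ℝ (⊤ : ℕ∞) (fderiv ℝ f) := (hf.fderiv_right (le_refl _))
  exact (ContinuousLinearMap.apply ℝ ℝ ((0:ℝ), (1:ℝ))).contDiff.comp h1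

lemma fderiv_shift {f : ℝ × ℝ → ℝ} (hf : Differentiable ℝ f) (c p : ℝ × ℝ)
    (hper : ∀ q, f (q + c) = f q) : fderiv ℝ f (p + c) = fderiv ℝ f p := by
  have h1 : (fun q => f (q + c)) = f := funext hper
  have h2 : fderiv ℝ (fun q => f (q + c)) p = fderiv ℝ f (p + c) := by
    have hid : HasFDerivAt (fun q : ℝ × ℝ => q + c) (ContinuousLinearMap.id ℝ (ℝ × ℝ)) p := by
      simpa using (hasFDerivAt_id p).add_const c
    have := ((hf (p + c)).hasFDerivAt.comp p hid)
    exact this.fderiv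
  rw [← h2, h1]

lemma dper_pd1 {f : ℝ × ℝ → ℝ} (hf : Differentiable ℝ f) (hp : DPer f) : DPer (pd1 f) := by
  intro p
  constructor
  · simp [pd1, fderiv_shift hf _ p (fun q => (hp q).1)]
  · simp [pd1, fderiv_shift hf _ p (fun q => (hp q).2)]

lemma dper_pd2 {f : ℝ × ℝ → ℝ} (hf : Differentiable ℝ f) (hp : DPer f) : DPer (pd2 f) := by
  intro p
  constructor
  · simp [pd2, fderiv_shift hf _ p (fun q => (hp q).1)]
  · simp [pd2, fderiv_shift hf _ p (fun q => (hp q).2)]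


lemma pd_comm {f : ℝ × ℝ → ℝ} (hf : ContDiff ℝ (⊤ : ℕ∞) f) (p : ℝ × ℝ) :
    pd1 (pd2 f) p = pd2 (pd1 f) p := by
  have hsym : IsSymmSndFDerivAt ℝ f p := by
    apply (hf.contDiffAt).isSymmSndFDerivAt
    rw [minSmoothness_of_isRCLikeNormedField]
    exact WithTop.coe_le_coe.mpr le_top
  have hdf : ContDiff ℝ (⊤ : ℕ∞) (fderiv ℝ f) := hf.fderiv_right (le_refl _)
  have key : ∀ w : ℝ × ℝ, fderiv ℝ (fun q => fderiv ℝ f q w) p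
      = (ContinuousLinearMap.apply ℝ ℝ w).comp (fderiv ℝ (fderiv ℝ f) p) := by
    intro w
    exact (((ContinuousLinearMap.apply ℝ ℝ w).hasFDerivAt).comp p
      ((hdf.differentiable (by simp)) p).hasFDerivAt).fderiv
  have h1 : pd1 (pd2 f) p = fderiv ℝ (fderiv ℝ f) p (1, 0) (0, 1) := by
    show fderiv ℝ (fun q => fderiv ℝ f q ((0:ℝ),(1:ℝ))) p ((1:ℝ),(0:ℝ)) = _
    rw [key ((0:ℝ),(1:ℝ))]; rfl
  have h2 : pd2 (pd1 f) p = fderiv ℝ (fderiv ℝ f) p (0, 1) (1, 0) := by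
    show fderiv ℝ (fun q => fderiv ℝ f q ((1:ℝ),(0:ℝ))) p ((0:ℝ),(1:ℝ)) = _
    rw [key ((1:ℝ),(0:ℝ))]; rfl
  rw [h1, h2, hsym (1,0) (0,1)]


lemma pd1_add {f g : ℝ × ℝ → ℝ} {p : ℝ × ℝ} (hf : DifferentiableAt ℝ f p)
    (hg : DifferentiableAt ℝ g p) :
    pd1 (fun q => f q + g q) p = pd1 f p + pd1 g p := by
  simp [pd1, fderiv_fun_add hf hg]

lemma pd2_add {f g : ℝ × ℝ → ℝ} {p : ℝ × ℝ} (hf : DifferentiableAt ℝ f p)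
    (hg : DifferentiableAt ℝ g p) :
    pd2 (fun q => f q + g q) p = pd2 f p + pd2 g p := by
  simp [pd2, fderiv_fun_add hf hg]

lemma hasFDerivAt_comp_fst {h : ℝ → ℝ} {p : ℝ × ℝ} (hh : DifferentiableAt ℝ h p.1) :
    HasFDerivAt (fun q : ℝ × ℝ => h q.1)
      ((deriv h p.1) • ContinuousLinearMap.fst ℝ ℝ ℝ) p :=
  (hh.hasDerivAt.comp_hasFDerivAt p hasFDerivAt_fst)

lemma hasFDerivAt_comp_snd {h : ℝ → ℝ} {p : ℝ × ℝ} (hh : DifferentiableAt ℝ h p.2) :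
    HasFDerivAt (fun q : ℝ × ℝ => h q.2)
      ((deriv h p.2) • ContinuousLinearMap.snd ℝ ℝ ℝ) p :=
  (hh.hasDerivAt.comp_hasFDerivAt p hasFDerivAt_snd)

lemma pd1_comp_fst {h : ℝ → ℝ} (hh : Differentiable ℝ h) (p : ℝ × ℝ) :
    pd1 (fun q : ℝ × ℝ => h q.1) p = deriv h p.1 := by
  rw [pd1, (hasFDerivAt_comp_fst (hh p.1)).fderiv]; simp

lemma pd2_comp_fst {h : ℝ → ℝ} (hh : Differentiable ℝ h) (p : ℝ × ℝ) :
    pd2 (fun q : ℝ × ℝ => h q.1) p = 0 := by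
  rw [pd2, (hasFDerivAt_comp_fst (hh p.1)).fderiv]; simp

lemma pd1_comp_snd {h : ℝ → ℝ} (hh : Differentiable ℝ h) (p : ℝ × ℝ) :
    pd1 (fun q : ℝ × ℝ => h q.2) p = 0 := by
  rw [pd1, (hasFDerivAt_comp_snd (hh p.2)).fderiv]; simp

lemma pd2_comp_snd {h : ℝ → ℝ} (hh : Differentiable ℝ h) (p : ℝ × ℝ) :
    pd2 (fun q : ℝ × ℝ => h q.2) p = deriv h p.2 := by
  rw [pd2, (hasFDerivAt_comp_snd (hh p.2)).fderiv]; simp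

/-- fderiv of the quadratic form -/
lemma hasFDerivAt_Q (e f g : ℝ) (p : ℝ × ℝ) :
    HasFDerivAt (fun q : ℝ × ℝ => e / 2 * q.1 ^ 2 + f * q.1 * q.2 + g / 2 * q.2 ^ 2)
      ((e * p.1 + f * p.2) • ContinuousLinearMap.fst ℝ ℝ ℝ
        + (f * p.1 + g * p.2) • ContinuousLinearMap.snd ℝ ℝ ℝ) p := by
  have h1 : HasFDerivAt (fun q : ℝ × ℝ => e / 2 * q.1 ^ 2)
      ((e * p.1) • ContinuousLinearMap.fst ℝ ℝ ℝ) p := by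
    have hd : HasDerivAt (fun t : ℝ => e / 2 * t ^ 2) (e * p.1) p.1 := by
      have := (hasDerivAt_pow 2 p.1).const_mul (e / 2)
      exact this.congr_deriv (by ring)
    exact hd.comp_hasFDerivAt p hasFDerivAt_fst
  have h2 : HasFDerivAt (fun q : ℝ × ℝ => f * q.1 * q.2)
      ((f * p.2) • ContinuousLinearMap.fst ℝ ℝ ℝ
        + (f * p.1) • ContinuousLinearMap.snd ℝ ℝ ℝ) p := by
    have hc : HasFDerivAt (fun q : ℝ × ℝ => f * q.1)
        (f • ContinuousLinearMap.fst ℝ ℝ ℝ) p := hasFDerivAt_fst.const_mul f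
    have hs : HasFDerivAt (fun q : ℝ × ℝ => q.2) (ContinuousLinearMap.snd ℝ ℝ ℝ) p := hasFDerivAt_snd
    have := hc.mul hs
    refine this.congr_fderiv ?_
    apply ContinuousLinearMap.ext; intro q
    simp; ring
  have h3 : HasFDerivAt (fun q : ℝ × ℝ => g / 2 * q.2 ^ 2)
      ((g * p.2) • ContinuousLinearMap.snd ℝ ℝ ℝ) p := by
    have hd : HasDerivAt (fun t : ℝ => g / 2 * t ^ 2) (g * p.2) p.2 := by
      have := (hasDerivAt_pow 2 p.2).const_mul (g / 2)
      exact this.congr_deriv (by ring)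
    exact hd.comp_hasFDerivAt p hasFDerivAt_snd
  have := (h1.add h2).add h3
  refine this.congr_fderiv ?_
  apply ContinuousLinearMap.ext; intro q
  simp; ring

lemma pd1_Q (e f g : ℝ) (p : ℝ × ℝ) :
    pd1 (fun q : ℝ × ℝ => e / 2 * q.1 ^ 2 + f * q.1 * q.2 + g / 2 * q.2 ^ 2) p
      = e * p.1 + f * p.2 := by
  rw [pd1, (hasFDerivAt_Q e f g p).fderiv]; simp

lemma pd2_Q (e f g : ℝ) (p : ℝ × ℝ) :
    pd2 (fun q : ℝ × ℝ => e / 2 * q.1 ^ 2 + f * q.1 * q.2 + g / 2 * q.2 ^ 2) p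
      = f * p.1 + g * p.2 := by
  rw [pd2, (hasFDerivAt_Q e f g p).fderiv]; simp

lemma hasFDerivAt_affine (c d : ℝ) (p : ℝ × ℝ) :
    HasFDerivAt (fun q : ℝ × ℝ => c * q.1 + d * q.2)
      (c • ContinuousLinearMap.fst ℝ ℝ ℝ + d • ContinuousLinearMap.snd ℝ ℝ ℝ) p := by
  have hs : HasFDerivAt (fun q : ℝ × ℝ => q.2) (ContinuousLinearMap.snd ℝ ℝ ℝ) p :=
    hasFDerivAt_snd
  have hf : HasFDerivAt (fun q : ℝ × ℝ => q.1) (ContinuousLinearMap.fst ℝ ℝ ℝ) p :=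
    hasFDerivAt_fst
  exact (hf.const_mul c).add (hs.const_mul d)

lemma pd1_affine (c d : ℝ) (p : ℝ × ℝ) :
    pd1 (fun q : ℝ × ℝ => c * q.1 + d * q.2) p = c := by
  rw [pd1, (hasFDerivAt_affine c d p).fderiv]; simp

lemma pd2_affine (c d : ℝ) (p : ℝ × ℝ) :
    pd2 (fun q : ℝ × ℝ => c * q.1 + d * q.2) p = d := by
  rw [pd2, (hasFDerivAt_affine c d p).fderiv]; simp

/-- Master computation of the Monge–Ampère operator for the translation graph. -/
lemma mop_eq (a b : ℝ → ℝ) (ha : ContDiff ℝ (⊤ : ℕ∞) a) (hb : ContDiff ℝ (⊤ : ℕ∞) b)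
    (zt : ℝ × ℝ → ℝ) (hzt : ContDiff ℝ (⊤ : ℕ∞) zt) (e f g : ℝ) (p : ℝ × ℝ) :
    Mop (fun q => a q.1 + b q.2)
        (fun q => zt q + e / 2 * q.1 ^ 2 + f * q.1 * q.2 + g / 2 * q.2 ^ 2) p
      = deriv (deriv a) p.1 * (pd2 (pd2 zt) p + g)
        + deriv (deriv b) p.2 * (pd1 (pd1 zt) p + e) := by
  have hda : Differentiable ℝ a := ha.differentiable (by simp)
  have hdb : Differentiable ℝ b := hb.differentiable (by simp)
  have hda' : Differentiable ℝ (deriv a) :=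
    ((contDiff_infty_iff_deriv.mp (ha.of_le (by simp))).2).differentiable (by norm_num)
  have hdb' : Differentiable ℝ (deriv b) :=
    ((contDiff_infty_iff_deriv.mp (hb.of_le (by simp))).2).differentiable (by norm_num)
  have hdzt : Differentiable ℝ zt := hzt.differentiable (by simp)
  -- derivatives of z
  have hz1 : pd1 (fun q : ℝ × ℝ => a q.1 + b q.2) = fun p => deriv a p.1 := by
    funext q
    rw [pd1_add (hasFDerivAt_comp_fst (hda q.1)).differentiableAt (hasFDerivAt_comp_snd (hdb q.2)).differentiableAt,
      pd1_comp_fst hda, pd1_comp_snd hdb, add_zero]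
  have hz2 : pd2 (fun q : ℝ × ℝ => a q.1 + b q.2) = fun p => deriv b p.2 := by
    funext q
    rw [pd2_add (hasFDerivAt_comp_fst (hda q.1)).differentiableAt (hasFDerivAt_comp_snd (hdb q.2)).differentiableAt,
      pd2_comp_fst hda, pd2_comp_snd hdb, zero_add]
  have hz11 : pd1 (pd1 fun q : ℝ × ℝ => a q.1 + b q.2) p = deriv (deriv a) p.1 := by
    rw [hz1, pd1_comp_fst hda']
  have hz22 : pd2 (pd2 fun q : ℝ × ℝ => a q.1 + b q.2) p = deriv (deriv b) p.2 := by
    rw [hz2, pd2_comp_snd hdb']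
  have hz12 : pd1 (pd2 fun q : ℝ × ℝ => a q.1 + b q.2) p = 0 := by
    rw [hz2, pd1_comp_snd hdb']
  -- derivatives of w
  have hwrw : (fun q : ℝ × ℝ => zt q + e / 2 * q.1 ^ 2 + f * q.1 * q.2 + g / 2 * q.2 ^ 2)
      = fun q => zt q + (e / 2 * q.1 ^ 2 + f * q.1 * q.2 + g / 2 * q.2 ^ 2) := by
    funext q; ring
  have hw1 : pd1 (fun q : ℝ × ℝ => zt q + e / 2 * q.1 ^ 2 + f * q.1 * q.2 + g / 2 * q.2 ^ 2)
      = fun p => pd1 zt p + (e * p.1 + f * p.2) := by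
    funext q
    rw [hwrw, pd1_add (hdzt q) (hasFDerivAt_Q e f g q).differentiableAt, pd1_Q]
  have hw2 : pd2 (fun q : ℝ × ℝ => zt q + e / 2 * q.1 ^ 2 + f * q.1 * q.2 + g / 2 * q.2 ^ 2)
      = fun p => pd2 zt p + (f * p.1 + g * p.2) := by
    funext q
    rw [hwrw, pd2_add (hdzt q) (hasFDerivAt_Q e f g q).differentiableAt, pd2_Q]
  have hw11 : pd1 (pd1 fun q : ℝ × ℝ =>
      zt q + e / 2 * q.1 ^ 2 + f * q.1 * q.2 + g / 2 * q.2 ^ 2) p = pd1 (pd1 zt) p + e := by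
    rw [hw1, pd1_add ((contDiff_pd1 hzt).differentiable (by simp) p)
      (hasFDerivAt_affine e f p).differentiableAt, pd1_affine]
  have hw22 : pd2 (pd2 fun q : ℝ × ℝ =>
      zt q + e / 2 * q.1 ^ 2 + f * q.1 * q.2 + g / 2 * q.2 ^ 2) p = pd2 (pd2 zt) p + g := by
    rw [hw2, pd2_add ((contDiff_pd2 hzt).differentiable (by simp) p)
      (hasFDerivAt_affine f g p).differentiableAt, pd2_affine]
  rw [Mop, hz11, hz22, hz12, hw11, hw22]
  ring

lemma periodic_deriv' {f : ℝ → ℝ} (hp : Function.Periodic f 1) :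
    Function.Periodic (deriv f) 1 := by
  intro x
  have h1 : (fun y => f (y + 1)) = f := funext hp
  have := deriv_comp_add_const f 1 x
  rw [h1] at this
  exact this.symm

lemma integral_sq_deriv_pos {a : ℝ → ℝ} (ha : ContDiff ℝ (⊤ : ℕ∞) a)
    (hpa : Function.Periodic a 1) (hna : ∃ s t, a s ≠ a t) :
    0 < ∫ s in (0:ℝ)..1, (deriv a s) ^ 2 := by
  have hda : Differentiable ℝ a := ha.differentiable (by simp)
  have hca : Continuous (deriv a) := ha.continuous_deriv (by simp)
  have hcont : Continuous fun s => (deriv a s) ^ 2 := hca.pow 2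
  obtain ⟨s0, t0, hst⟩ := hna
  have hne : ∃ u, deriv a u ≠ 0 := by
    by_contra h
    push_neg at h
    exact hst (is_const_of_deriv_eq_zero hda h s0 t0)
  obtain ⟨u0, hu0⟩ := hne
  have hper : Function.Periodic (deriv a) 1 := periodic_deriv' hpa
  set u1 : ℝ := Int.fract u0 with hu1
  have hu1mem : u1 ∈ Set.Ico (0:ℝ) 1 := ⟨Int.fract_nonneg u0, Int.fract_lt_one u0⟩
  have hu1ne : deriv a u1 ≠ 0 := by
    have h2 : deriv a (u0 - (⌊u0⌋ : ℤ) • (1:ℝ)) = deriv a u0 := hper.sub_zsmul_eq ⌊u0⌋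
    have h3 : u1 = u0 - (⌊u0⌋ : ℤ) • (1:ℝ) := by
      rw [hu1, Int.fract]
      simp
    rw [h3, h2]; exact hu0
  -- find a point strictly inside (0,1)
  have hV : IsOpen {x : ℝ | deriv a x ≠ 0} := isOpen_ne.preimage hca
  have hex : ∃ u2 ∈ Set.Ioo (0:ℝ) 1, deriv a u2 ≠ 0 := by
    rcases eq_or_lt_of_le hu1mem.1 with h0 | h0
    · -- u1 = 0 : use openness at 0
      obtain ⟨ε, hε, hball⟩ := Metric.isOpen_iff.mp hV u1 hu1ne
      refine ⟨min (ε / 2) (1 / 2), ⟨by positivity, ?_⟩, ?_⟩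
      · exact lt_of_le_of_lt (min_le_right _ _) (by norm_num)
      · apply hball
        rw [Metric.mem_ball, Real.dist_eq, ← h0]
        simp only [sub_zero]
        rw [abs_of_pos (by positivity)]
        exact lt_of_le_of_lt (min_le_left _ _) (by linarith)
    · exact ⟨u1, ⟨h0, hu1mem.2⟩, hu1ne⟩
  obtain ⟨u2, hu2mem, hu2ne⟩ := hex
  -- positivity of the integral
  rw [intervalIntegral.integral_of_le zero_le_one]
  have hint : IntegrableOn (fun s => (deriv a s) ^ 2) (Set.Ioc 0 1) volume :=
    (hcont.intervalIntegrable 0 1).1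
  rw [show (∫ s in Set.Ioc (0:ℝ) 1, (deriv a s) ^ 2)
      = ∫ s, (deriv a s) ^ 2 ∂(volume.restrict (Set.Ioc (0:ℝ) 1)) from rfl]
  rw [integral_pos_iff_support_of_nonneg (fun s => sq_nonneg _) hint]
  have hsub : {x : ℝ | deriv a x ≠ 0} ∩ Set.Ioo 0 1 ⊆
      Function.support (fun s => (deriv a s) ^ 2) := by
    intro x hx
    simp only [Function.mem_support]
    exact pow_ne_zero 2 hx.1
  have hopen : IsOpen ({x : ℝ | deriv a x ≠ 0} ∩ Set.Ioo 0 1) := hV.inter isOpen_Ioo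
  have hne2 : ({x : ℝ | deriv a x ≠ 0} ∩ Set.Ioo 0 1).Nonempty := ⟨u2, hu2ne, hu2mem⟩
  have hpos := hopen.measure_pos volume hne2
  refine lt_of_lt_of_le hpos ?_
  rw [Measure.restrict_apply' measurableSet_Ioc]
  apply measure_mono
  intro x hx
  exact ⟨hsub hx, Set.Ioo_subset_Ioc_self hx.2⟩

lemma swap01 {F : ℝ × ℝ → ℝ} (hF : Continuous F) :
    ∫ u in (0:ℝ)..1, (∫ v in (0:ℝ)..1, F (u, v)) = ∫ v in (0:ℝ)..1, (∫ u in (0:ℝ)..1, F (u, v)) := by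
  have hInt : Integrable (Function.uncurry fun u v => F (u, v))
      ((volume.restrict (Set.Ioc (0:ℝ) 1)).prod (volume.restrict (Set.Ioc (0:ℝ) 1))) := by
    rw [Measure.prod_restrict]
    have h1 : IntegrableOn F ((Set.Icc (0:ℝ) 1) ×ˢ (Set.Icc (0:ℝ) 1)) (volume.prod volume) := by
      rw [← MeasureTheory.Measure.volume_eq_prod]
      exact (hF.locallyIntegrable).integrableOn_isCompact (isCompact_Icc.prod isCompact_Icc)
    exact (h1.mono_set (Set.prod_mono Set.Ioc_subset_Icc_self Set.Ioc_subset_Icc_self))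
  have := MeasureTheory.integral_integral_swap hInt
  simpa [intervalIntegral.integral_of_le (zero_le_one (α := ℝ))] using this

/-- congruence helper -/
lemma icongr {f g : ℝ → ℝ} (h : ∀ x, f x = g x) :
    ∫ x in (0:ℝ)..1, f x = ∫ x in (0:ℝ)..1, g x :=
  intervalIntegral.integral_congr (fun x _ => h x)


/-- for the translation graph of non-constant smooth periodic `a, b`,
the effective strain `E = diag(−∫a'², ∫b'²)` has negative determinant, and any
effective infinitesimal isometry `(e,f,g)` bends synclastically:
`e/g = (∫a'²)/(∫b'²) > 0` whenever `g ≠ 0`. -/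
theorem stmt8 (a b : ℝ → ℝ) (ha : ContDiff ℝ (⊤ : ℕ∞) a) (hb : ContDiff ℝ (⊤ : ℕ∞) b)
    (hpa : Function.Periodic a 1) (hpb : Function.Periodic b 1)
    (hna : ∃ s t, a s ≠ a t) (hnb : ∃ s t, b s ≠ b t)
    (e f g : ℝ)
    (heff : ∃ zt : ℝ × ℝ → ℝ, ContDiff ℝ (⊤ : ℕ∞) zt ∧ DPer zt ∧
      ∀ p, Mop (fun q => a q.1 + b q.2)
        (fun q => zt q + e / 2 * q.1 ^ 2 + f * q.1 * q.2 + g / 2 * q.2 ^ 2) p = 0) :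
    (-(∫ s in (0:ℝ)..1, (deriv a s) ^ 2)) * (∫ s in (0:ℝ)..1, (deriv b s) ^ 2) < 0 ∧
    (g ≠ 0 →
      e / g = (∫ s in (0:ℝ)..1, (deriv a s) ^ 2) / (∫ s in (0:ℝ)..1, (deriv b s) ^ 2) ∧
      (∫ s in (0:ℝ)..1, (deriv a s) ^ 2) / (∫ s in (0:ℝ)..1, (deriv b s) ^ 2) > 0) := by
  obtain ⟨zt, hzt, hperz, hpde⟩ := heff
  have hA : 0 < ∫ s in (0:ℝ)..1, (deriv a s) ^ 2 := integral_sq_deriv_pos ha hpa hna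
  have hB : 0 < ∫ s in (0:ℝ)..1, (deriv b s) ^ 2 := integral_sq_deriv_pos hb hpb hnb
  -- names
  set a1 : ℝ → ℝ := deriv a with ha1d
  set b1 : ℝ → ℝ := deriv b with hb1d
  set a2 : ℝ → ℝ := deriv a1 with ha2d
  set b2 : ℝ → ℝ := deriv b1 with hb2d
  set A : ℝ := ∫ s in (0:ℝ)..1, a1 s ^ 2 with hAd
  set B : ℝ := ∫ s in (0:ℝ)..1, b1 s ^ 2 with hBd
  set P1 : ℝ × ℝ → ℝ := pd1 zt with hP1d
  set P2 : ℝ × ℝ → ℝ := pd2 zt with hP2d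
  set P11 : ℝ × ℝ → ℝ := pd1 P1 with hP11d
  set P22 : ℝ × ℝ → ℝ := pd2 P2 with hP22d
  set P12 : ℝ × ℝ → ℝ := pd1 P2 with hP12d
  set P112 : ℝ × ℝ → ℝ := pd1 P12 with hP112d
  -- basic differentiability / continuity
  have hda : Differentiable ℝ a := ha.differentiable (by simp)
  have hdb : Differentiable ℝ b := hb.differentiable (by simp)
  have hia : ContDiff ℝ ∞ a1 := (contDiff_infty_iff_deriv.mp (ha.of_le (by simp))).2
  have hib : ContDiff ℝ ∞ b1 := (contDiff_infty_iff_deriv.mp (hb.of_le (by simp))).2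
  have hda1 : Differentiable ℝ a1 := hia.differentiable (by norm_num)
  have hdb1 : Differentiable ℝ b1 := hib.differentiable (by norm_num)
  have hca : Continuous a := hda.continuous
  have hcb : Continuous b := hdb.continuous
  have hca1 : Continuous a1 := hda1.continuous
  have hcb1 : Continuous b1 := hdb1.continuous
  have hca2 : Continuous a2 := hia.continuous_deriv (by exact_mod_cast le_top)
  have hcb2 : Continuous b2 := hib.continuous_deriv (by exact_mod_cast le_top)
  have hiP1 : ContDiff ℝ (⊤ : ℕ∞) P1 := contDiff_pd1 hzt
  have hiP2 : ContDiff ℝ (⊤ : ℕ∞) P2 := contDiff_pd2 hzt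
  have hiP11 : ContDiff ℝ (⊤ : ℕ∞) P11 := contDiff_pd1 hiP1
  have hiP22 : ContDiff ℝ (⊤ : ℕ∞) P22 := contDiff_pd2 hiP2
  have hiP12 : ContDiff ℝ (⊤ : ℕ∞) P12 := contDiff_pd1 hiP2
  have hiP112 : ContDiff ℝ (⊤ : ℕ∞) P112 := contDiff_pd1 hiP12
  have hcP2 : Continuous P2 := hiP2.continuous
  have hcP11 : Continuous P11 := hiP11.continuous
  have hcP22 : Continuous P22 := hiP22.continuous
  have hcP12 : Continuous P12 := hiP12.continuous
  have hcP112 : Continuous P112 := hiP112.continuous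
  -- periodicity
  have hpa1 : Function.Periodic a1 1 := periodic_deriv' hpa
  have hpb1 : Function.Periodic b1 1 := periodic_deriv' hpb
  have hDP1 : DPer P1 := dper_pd1 (hzt.differentiable (by simp)) hperz
  have hDP2 : DPer P2 := dper_pd2 (hzt.differentiable (by simp)) hperz
  have hDP11 : DPer P11 := dper_pd1 (hiP1.differentiable (by simp)) hDP1
  have hDP12 : DPer P12 := dper_pd1 (hiP2.differentiable (by simp)) hDP2
  -- boundary values
  have ea : a 1 = a 0 := by simpa using hpa 0
  have eb : b 1 = b 0 := by simpa using hpb 0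
  have ea1 : a1 1 = a1 0 := by simpa using hpa1 0
  have eb1 : b1 1 = b1 0 := by simpa using hpb1 0
  have eP2v : ∀ u, P2 (u, 1) = P2 (u, 0) := by
    intro u
    have := (hDP2 (u, 0)).2
    simpa [Prod.mk_add_mk] using this
  have eP2u : ∀ v, P2 (1, v) = P2 (0, v) := by
    intro v
    have := (hDP2 (0, v)).1
    simpa [Prod.mk_add_mk] using this
  have eP1u : ∀ v, P1 (1, v) = P1 (0, v) := by
    intro v
    have := (hDP1 (0, v)).1
    simpa [Prod.mk_add_mk] using this
  have eP11v : ∀ u, P11 (u, 1) = P11 (u, 0) := by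
    intro u
    have := (hDP11 (u, 0)).2
    simpa [Prod.mk_add_mk] using this
  have eP12u : ∀ v, P12 (1, v) = P12 (0, v) := by
    intro v
    have := (hDP12 (0, v)).1
    simpa [Prod.mk_add_mk] using this
  -- slice derivatives
  have sP22 : ∀ u v, HasDerivAt (fun t => P2 (u, t)) (P22 (u, v)) v := fun u v =>
    hasDerivAt_slice2 ((hiP2.differentiable (by simp)) (u, v))
  have sP11 : ∀ u v, HasDerivAt (fun t => P1 (t, v)) (P11 (u, v)) u := fun u v =>
    hasDerivAt_slice1 ((hiP1.differentiable (by simp)) (u, v))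
  have sP12 : ∀ u v, HasDerivAt (fun t => P2 (t, v)) (P12 (u, v)) u := fun u v =>
    hasDerivAt_slice1 ((hiP2.differentiable (by simp)) (u, v))
  have sP112 : ∀ u v, HasDerivAt (fun t => P12 (t, v)) (P112 (u, v)) u := fun u v =>
    hasDerivAt_slice1 ((hiP12.differentiable (by simp)) (u, v))
  -- mixed-derivative symmetry : pd2 P11 = P112
  have e21 : pd2 P1 = P12 := by
    funext p
    rw [hP12d, hP1d, hP2d]
    exact (pd_comm hzt p).symm
  have e1121 : ∀ p, pd2 P11 p = P112 p := by
    intro p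
    rw [hP11d, ← pd_comm hiP1 p, e21, hP112d]
  have sP11v : ∀ u v, HasDerivAt (fun t => P11 (u, t)) (P112 (u, v)) v := by
    intro u v
    have := hasDerivAt_slice2 ((hiP11.differentiable (by simp)) (u, v))
    rwa [e1121 (u, v)] at this
  -- the pointwise PDE
  have key : ∀ u v : ℝ, a2 u * (P22 (u, v) + g) + b2 v * (P11 (u, v) + e) = 0 := by
    intro u v
    have h1 := mop_eq a b ha hb zt hzt e f g (u, v)
    have h2 := hpde (u, v)
    rw [h2] at h1
    exact h1.symm
  -- elementary integrals
  have E2 : ∫ u in (0:ℝ)..1, a2 u = 0 := by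
    rw [intervalIntegral.integral_eq_sub_of_hasDerivAt (f := a1)
      (fun x _ => (hda1 x).hasDerivAt) (hca2.intervalIntegrable 0 1), ea1, sub_self]
  have E2b : ∫ v in (0:ℝ)..1, b2 v = 0 := by
    rw [intervalIntegral.integral_eq_sub_of_hasDerivAt (f := b1)
      (fun x _ => (hdb1 x).hasDerivAt) (hcb2.intervalIntegrable 0 1), eb1, sub_self]
  have E3 : ∫ u in (0:ℝ)..1, a u * a2 u = -A := by
    rw [intervalIntegral.integral_mul_deriv_eq_deriv_mul (u := a) (v := a1) (u' := a1) (v' := a2)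
      (fun x _ => (hda x).hasDerivAt) (fun x _ => (hda1 x).hasDerivAt)
      (hca1.intervalIntegrable 0 1) (hca2.intervalIntegrable 0 1), ea, ea1]
    have : ∫ u in (0:ℝ)..1, a1 u * a1 u = A := by
      rw [hAd]; exact icongr fun x => by ring
    rw [this]; ring
  have E4 : ∫ v in (0:ℝ)..1, b v * b2 v = -B := by
    rw [intervalIntegral.integral_mul_deriv_eq_deriv_mul (u := b) (v := b1) (u' := b1) (v' := b2)
      (fun x _ => (hdb x).hasDerivAt) (fun x _ => (hdb1 x).hasDerivAt)
      (hcb1.intervalIntegrable 0 1) (hcb2.intervalIntegrable 0 1), eb, eb1]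
    have : ∫ v in (0:ℝ)..1, b1 v * b1 v = B := by
      rw [hBd]; exact icongr fun x => by ring
    rw [this]; ring
  have E1 : ∀ u, ∫ v in (0:ℝ)..1, P22 (u, v) = 0 := by
    intro u
    rw [intervalIntegral.integral_eq_sub_of_hasDerivAt (f := fun t => P2 (u, t))
      (fun v _ => sP22 u v) ((hcP22.comp (Continuous.prodMk_right u)).intervalIntegrable 0 1),
      eP2v u, sub_self]
  have M7 : ∀ v, ∫ u in (0:ℝ)..1, P11 (u, v) = 0 := by
    intro v
    rw [intervalIntegral.integral_eq_sub_of_hasDerivAt (f := fun t => P1 (t, v))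
      (fun u _ => sP11 u v)
      ((hcP11.comp (continuous_id.prodMk continuous_const)).intervalIntegrable 0 1),
      eP1u v, sub_self]
  -- integration by parts identities
  have K : ∀ u, ∫ v in (0:ℝ)..1, b v * P22 (u, v)
      = -∫ v in (0:ℝ)..1, b1 v * P2 (u, v) := by
    intro u
    rw [intervalIntegral.integral_mul_deriv_eq_deriv_mul (u := b) (v := fun t => P2 (u, t))
      (u' := b1) (v' := fun t => P22 (u, t))
      (fun x _ => (hdb x).hasDerivAt) (fun x _ => sP22 u x)
      (hcb1.intervalIntegrable 0 1)
      ((hcP22.comp (Continuous.prodMk_right u)).intervalIntegrable 0 1), eb, eP2v u]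
    ring
  have L : ∀ u, ∫ v in (0:ℝ)..1, b2 v * P11 (u, v)
      = -∫ v in (0:ℝ)..1, b1 v * P112 (u, v) := by
    intro u
    have h := intervalIntegral.integral_mul_deriv_eq_deriv_mul
      (u := fun t => P11 (u, t)) (v := b1) (u' := fun t => P112 (u, t)) (v' := b2)
      (fun x _ => sP11v u x) (fun x _ => (hdb1 x).hasDerivAt)
      ((hcP112.comp (Continuous.prodMk_right u)).intervalIntegrable 0 1)
      (hcb2.intervalIntegrable 0 1)
    simp only [eP11v u, eb1] at h
    have h1 : ∫ v in (0:ℝ)..1, b2 v * P11 (u, v)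
        = ∫ v in (0:ℝ)..1, P11 (u, v) * b2 v := icongr fun x => by ring
    have h2 : ∫ v in (0:ℝ)..1, P112 (u, v) * b1 v
        = ∫ v in (0:ℝ)..1, b1 v * P112 (u, v) := icongr fun x => by ring
    rw [h1, h, h2]; ring
  have N : ∀ v, ∫ u in (0:ℝ)..1, a2 u * P2 (u, v)
      = -∫ u in (0:ℝ)..1, a1 u * P12 (u, v) := by
    intro v
    have h := intervalIntegral.integral_mul_deriv_eq_deriv_mul
      (u := fun t => P2 (t, v)) (v := a1) (u' := fun t => P12 (t, v)) (v' := a2)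
      (fun x _ => sP12 x v) (fun x _ => (hda1 x).hasDerivAt)
      ((hcP12.comp (continuous_id.prodMk continuous_const)).intervalIntegrable 0 1)
      (hca2.intervalIntegrable 0 1)
    simp only [eP2u v, ea1] at h
    have h1 : ∫ u in (0:ℝ)..1, a2 u * P2 (u, v)
        = ∫ u in (0:ℝ)..1, P2 (u, v) * a2 u := icongr fun x => by ring
    have h2 : ∫ u in (0:ℝ)..1, P12 (u, v) * a1 u
        = ∫ u in (0:ℝ)..1, a1 u * P12 (u, v) := icongr fun x => by ring
    rw [h1, h, h2]; ring
  have O : ∀ v, ∫ u in (0:ℝ)..1, a u * P112 (u, v)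
      = -∫ u in (0:ℝ)..1, a1 u * P12 (u, v) := by
    intro v
    rw [intervalIntegral.integral_mul_deriv_eq_deriv_mul (u := a) (v := fun t => P12 (t, v))
      (u' := a1) (v' := fun t => P112 (t, v))
      (fun x _ => (hda x).hasDerivAt) (fun x _ => sP112 x v)
      (hca1.intervalIntegrable 0 1)
      ((hcP112.comp (continuous_id.prodMk continuous_const)).intervalIntegrable 0 1),
      ea, eP12u v]
    ring
  -- the vanishing double integral
  have Z0 : (∫ u in (0:ℝ)..1, ∫ v in (0:ℝ)..1,
      (a u - b v) * (a2 u * (P22 (u, v) + g) + b2 v * (P11 (u, v) + e))) = 0 := by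
    have h1 : ∀ u, (∫ v in (0:ℝ)..1,
        (a u - b v) * (a2 u * (P22 (u, v) + g) + b2 v * (P11 (u, v) + e))) = (0:ℝ) := by
      intro u
      rw [icongr (g := fun _ => (0:ℝ)) (fun v => by rw [key u v]; ring)]
      simp
    rw [icongr h1]
    simp
  -- expansion of the inner integral
  have inner_eq : ∀ u, (∫ v in (0:ℝ)..1,
      (a u - b v) * (a2 u * (P22 (u, v) + g) + b2 v * (P11 (u, v) + e)))
      = g * (a u * a2 u)
        + a u * (-∫ v in (0:ℝ)..1, b1 v * P112 (u, v))
        + a2 u * (∫ v in (0:ℝ)..1, b1 v * P2 (u, v))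
        + -(g * a2 u * (∫ v in (0:ℝ)..1, b v))
        + -(∫ v in (0:ℝ)..1, (b v * b2 v) * P11 (u, v))
        + e * B := by
    intro u
    have c1 : Continuous fun v => (a u * a2 u) * P22 (u, v) :=
      continuous_const.mul (hcP22.comp (Continuous.prodMk_right u))
    have c2 : Continuous fun _ : ℝ => g * (a u * a2 u) := continuous_const
    have c3 : Continuous fun v => a u * (b2 v * P11 (u, v)) :=
      continuous_const.mul (hcb2.mul (hcP11.comp (Continuous.prodMk_right u)))
    have c4 : Continuous fun v => (a u * e) * b2 v := continuous_const.mul hcb2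
    have c5 : Continuous fun v => -(a2 u * (b v * P22 (u, v))) :=
      (continuous_const.mul (hcb.mul (hcP22.comp (Continuous.prodMk_right u)))).neg
    have c6 : Continuous fun v => -((g * a2 u) * b v) := (continuous_const.mul hcb).neg
    have c7 : Continuous fun v => -((b v * b2 v) * P11 (u, v)) :=
      ((hcb.mul hcb2).mul (hcP11.comp (Continuous.prodMk_right u))).neg
    have c8 : Continuous fun v => -(e * (b v * b2 v)) := (continuous_const.mul (hcb.mul hcb2)).neg
    rw [icongr (g := fun v => (a u * a2 u) * P22 (u, v) + g * (a u * a2 u)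
        + a u * (b2 v * P11 (u, v)) + (a u * e) * b2 v + -(a2 u * (b v * P22 (u, v)))
        + -((g * a2 u) * b v) + -((b v * b2 v) * P11 (u, v)) + -(e * (b v * b2 v)))
      (fun v => by ring)]
    rw [intervalIntegral.integral_add
        (((((((c1.fun_add c2).fun_add c3).fun_add c4).fun_add c5).fun_add c6).fun_add c7).intervalIntegrable 0 1)
        (c8.intervalIntegrable 0 1),
      intervalIntegral.integral_add
        ((((((c1.fun_add c2).fun_add c3).fun_add c4).fun_add c5).fun_add c6).intervalIntegrable 0 1)
        (c7.intervalIntegrable 0 1),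
      intervalIntegral.integral_add
        (((((c1.fun_add c2).fun_add c3).fun_add c4).fun_add c5).intervalIntegrable 0 1)
        (c6.intervalIntegrable 0 1),
      intervalIntegral.integral_add
        ((((c1.fun_add c2).fun_add c3).fun_add c4).intervalIntegrable 0 1)
        (c5.intervalIntegrable 0 1),
      intervalIntegral.integral_add
        (((c1.fun_add c2).fun_add c3).intervalIntegrable 0 1)
        (c4.intervalIntegrable 0 1),
      intervalIntegral.integral_add
        ((c1.fun_add c2).intervalIntegrable 0 1)
        (c3.intervalIntegrable 0 1),
      intervalIntegral.integral_add
        (c1.intervalIntegrable 0 1)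
        (c2.intervalIntegrable 0 1)]
    have v1 : ∫ v in (0:ℝ)..1, (a u * a2 u) * P22 (u, v) = 0 := by
      rw [intervalIntegral.integral_const_mul, E1 u, mul_zero]
    have v2 : ∫ _ in (0:ℝ)..1, g * (a u * a2 u) = g * (a u * a2 u) := by simp
    have v3 : ∫ v in (0:ℝ)..1, a u * (b2 v * P11 (u, v))
        = a u * (-∫ v in (0:ℝ)..1, b1 v * P112 (u, v)) := by
      rw [intervalIntegral.integral_const_mul, L u]
    have v4 : ∫ v in (0:ℝ)..1, (a u * e) * b2 v = 0 := by
      rw [intervalIntegral.integral_const_mul, E2b, mul_zero]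
    have v5 : ∫ v in (0:ℝ)..1, -(a2 u * (b v * P22 (u, v)))
        = a2 u * (∫ v in (0:ℝ)..1, b1 v * P2 (u, v)) := by
      rw [intervalIntegral.integral_neg, intervalIntegral.integral_const_mul, K u]
      ring
    have v6 : ∫ v in (0:ℝ)..1, -((g * a2 u) * b v)
        = -(g * a2 u * (∫ v in (0:ℝ)..1, b v)) := by
      rw [intervalIntegral.integral_neg, intervalIntegral.integral_const_mul]
    have v7 : ∫ v in (0:ℝ)..1, -((b v * b2 v) * P11 (u, v))
        = -(∫ v in (0:ℝ)..1, (b v * b2 v) * P11 (u, v)) := by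
      rw [intervalIntegral.integral_neg]
    have v8 : ∫ v in (0:ℝ)..1, -(e * (b v * b2 v)) = e * B := by
      rw [intervalIntegral.integral_neg, intervalIntegral.integral_const_mul, E4]
      ring
    rw [v1, v2, v3, v4, v5, v6, v7, v8]
    ring
  -- the exchanged cross term
  set X : ℝ := ∫ v in (0:ℝ)..1, b1 v * ∫ u in (0:ℝ)..1, a1 u * P12 (u, v) with hXd
  -- outer integral evaluations
  have cLv : Continuous fun u => ∫ v in (0:ℝ)..1, b1 v * P112 (u, v) := by
    apply intervalIntegral.continuous_parametric_intervalIntegral_of_continuous'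
    exact (hcb1.comp continuous_snd).mul hcP112
  have cKv : Continuous fun u => ∫ v in (0:ℝ)..1, b1 v * P2 (u, v) := by
    apply intervalIntegral.continuous_parametric_intervalIntegral_of_continuous'
    exact (hcb1.comp continuous_snd).mul hcP2
  have cW : Continuous fun u => ∫ v in (0:ℝ)..1, (b v * b2 v) * P11 (u, v) := by
    apply intervalIntegral.continuous_parametric_intervalIntegral_of_continuous'
    exact ((hcb.comp continuous_snd).mul (hcb2.comp continuous_snd)).mul hcP11
  have d1 : Continuous fun u => g * (a u * a2 u) := continuous_const.mul (hca.mul hca2)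
  have d2 : Continuous fun u => a u * (-∫ v in (0:ℝ)..1, b1 v * P112 (u, v)) :=
    hca.mul cLv.neg
  have d3 : Continuous fun u => a2 u * (∫ v in (0:ℝ)..1, b1 v * P2 (u, v)) := hca2.mul cKv
  have d4 : Continuous fun u => -(g * a2 u * (∫ v in (0:ℝ)..1, b v)) :=
    ((continuous_const.mul hca2).mul continuous_const).neg
  have d5 : Continuous fun u => -(∫ v in (0:ℝ)..1, (b v * b2 v) * P11 (u, v)) := cW.neg
  have d6 : Continuous fun _ : ℝ => e * B := continuous_const
  have w1 : ∫ u in (0:ℝ)..1, g * (a u * a2 u) = g * -A := by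
    rw [icongr (g := fun u => g * (a u * a2 u)) (fun u => rfl),
      intervalIntegral.integral_const_mul]
    rw [icongr (g := fun u => a u * a2 u) (fun u => rfl), E3]
  have w2 : ∫ u in (0:ℝ)..1, a u * (-∫ v in (0:ℝ)..1, b1 v * P112 (u, v)) = X := by
    rw [icongr (g := fun u => -(a u * ∫ v in (0:ℝ)..1, b1 v * P112 (u, v)))
      (fun u => by ring), intervalIntegral.integral_neg]
    rw [icongr (g := fun u => ∫ v in (0:ℝ)..1, a u * (b1 v * P112 (u, v)))
      (fun u => (intervalIntegral.integral_const_mul _ _).symm)]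
    have hswap : (∫ u in (0:ℝ)..1, ∫ v in (0:ℝ)..1, a u * (b1 v * P112 (u, v)))
        = ∫ v in (0:ℝ)..1, ∫ u in (0:ℝ)..1, a u * (b1 v * P112 (u, v)) :=
      swap01 (F := fun p => a p.1 * (b1 p.2 * P112 p))
        ((hca.comp continuous_fst).mul ((hcb1.comp continuous_snd).mul hcP112))
    rw [hswap]
    have hv : ∀ v, (∫ u in (0:ℝ)..1, a u * (b1 v * P112 (u, v)))
        = -(b1 v * ∫ u in (0:ℝ)..1, a1 u * P12 (u, v)) := by
      intro v
      rw [icongr (g := fun u => b1 v * (a u * P112 (u, v))) (fun u => by ring),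
        intervalIntegral.integral_const_mul, O v]
      ring
    rw [icongr hv, intervalIntegral.integral_neg, hXd]
    simp
  have w3 : ∫ u in (0:ℝ)..1, a2 u * (∫ v in (0:ℝ)..1, b1 v * P2 (u, v)) = -X := by
    rw [icongr (g := fun u => ∫ v in (0:ℝ)..1, a2 u * (b1 v * P2 (u, v)))
      (fun u => (intervalIntegral.integral_const_mul _ _).symm)]
    have hswap : (∫ u in (0:ℝ)..1, ∫ v in (0:ℝ)..1, a2 u * (b1 v * P2 (u, v)))
        = ∫ v in (0:ℝ)..1, ∫ u in (0:ℝ)..1, a2 u * (b1 v * P2 (u, v)) :=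
      swap01 (F := fun p => a2 p.1 * (b1 p.2 * P2 p))
        ((hca2.comp continuous_fst).mul ((hcb1.comp continuous_snd).mul hcP2))
    rw [hswap]
    have hv : ∀ v, (∫ u in (0:ℝ)..1, a2 u * (b1 v * P2 (u, v)))
        = -(b1 v * ∫ u in (0:ℝ)..1, a1 u * P12 (u, v)) := by
      intro v
      rw [icongr (g := fun u => b1 v * (a2 u * P2 (u, v))) (fun u => by ring),
        intervalIntegral.integral_const_mul, N v]
      ring
    rw [icongr hv, intervalIntegral.integral_neg, hXd]
  have w4 : ∫ u in (0:ℝ)..1, -(g * a2 u * (∫ v in (0:ℝ)..1, b v)) = 0 := by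
    rw [icongr (g := fun u => -((g * (∫ v in (0:ℝ)..1, b v)) * a2 u)) (fun u => by ring),
      intervalIntegral.integral_neg, intervalIntegral.integral_const_mul, E2]
    simp
  have w5 : ∫ u in (0:ℝ)..1, -(∫ v in (0:ℝ)..1, (b v * b2 v) * P11 (u, v)) = 0 := by
    rw [intervalIntegral.integral_neg]
    have hswap : (∫ u in (0:ℝ)..1, ∫ v in (0:ℝ)..1, (b v * b2 v) * P11 (u, v))
        = ∫ v in (0:ℝ)..1, ∫ u in (0:ℝ)..1, (b v * b2 v) * P11 (u, v) :=
      swap01 (F := fun p => (b p.2 * b2 p.2) * P11 p)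
        (((hcb.comp continuous_snd).mul (hcb2.comp continuous_snd)).mul hcP11)
    rw [hswap]
    have hv : ∀ v, (∫ u in (0:ℝ)..1, (b v * b2 v) * P11 (u, v)) = 0 := by
      intro v
      rw [intervalIntegral.integral_const_mul, M7 v, mul_zero]
    rw [icongr hv]
    simp
  have w6 : ∫ _ in (0:ℝ)..1, e * B = e * B := by simp
  -- assemble
  have main : e * B = g * A := by
    have hsplit : (∫ u in (0:ℝ)..1, ∫ v in (0:ℝ)..1,
        (a u - b v) * (a2 u * (P22 (u, v) + g) + b2 v * (P11 (u, v) + e)))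
        = g * -A + X + -X + 0 + 0 + e * B := by
      rw [icongr inner_eq]
      rw [intervalIntegral.integral_add
          ((((((d1.fun_add d2).fun_add d3).fun_add d4).fun_add d5)).intervalIntegrable 0 1)
          (d6.intervalIntegrable 0 1),
        intervalIntegral.integral_add
          (((((d1.fun_add d2).fun_add d3).fun_add d4)).intervalIntegrable 0 1)
          (d5.intervalIntegrable 0 1),
        intervalIntegral.integral_add
          ((((d1.fun_add d2).fun_add d3)).intervalIntegrable 0 1)
          (d4.intervalIntegrable 0 1),
        intervalIntegral.integral_add
          (((d1.fun_add d2)).intervalIntegrable 0 1)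
          (d3.intervalIntegrable 0 1),
        intervalIntegral.integral_add
          (d1.intervalIntegrable 0 1)
          (d2.intervalIntegrable 0 1)]
      rw [w1, w2, w3, w4, w5, w6]
    rw [Z0] at hsplit
    linarith [hsplit]
  constructor
  · nlinarith [mul_pos hA hB]
  · intro hg
    constructor
    · rw [div_eq_div_iff hg hB.ne']
      linarith [main]
    · exact div_pos hA hB
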